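/- Let A be a nonnegative n×n matrix with column sums at most 1, and suppose for every index j there exists a path j = j_0 → j_1 → ... → j_m (with A_{j_{t+1} j_t} > 0) ending at an index j_m whose column sum in A is strictly less than 1. Then the spectral radius of A is strictly less than 1. -/

import Mathlib

/-- A nonnegative matrix with column sums at most 1, such that every index has a
path (through positive entries) to a column with sum strictly less than 1, has
spectral radius strictly less than 1. -/
theorem stmt_15 {n : ℕ} (A : Matrix (Fin n) (Fin n) ℝ)
    (hA : ∀ i j, 0 ≤ A i j)
    (hcol : ∀ j, ∑ i, A i j ≤ 1)
    (hpath : ∀ j : Fin n, ∃ (m : ℕ) (path : ℕ → Fin n), path 0 = j ∧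
      (∀ t < m, 0 < A (path (t + 1)) (path t)) ∧ ∑ i, A i (path m) < 1) :
    ∀ (lam : ℂ) (v : Fin n → ℂ), v ≠ 0 →
      (A.map (Complex.ofReal)).mulVec v = lam • v → ‖lam‖ < 1 := by
  intro lam v hv hev
  by_contra hlam
  push_neg at hlam
  set r := ‖lam‖ with hr
  set w : Fin n → ℝ := fun i => ‖v i‖ with hw
  have hw0 : ∀ i, 0 ≤ w i := fun i => norm_nonneg _
  have h1 : ∀ i, r * w i ≤ ∑ j, A i j * w j := by
    intro i
    have he : (∑ j, (A i j : ℂ) * v j) = lam * v i := by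
      have := congrFun hev i
      simpa [Matrix.mulVec, Matrix.map, dotProduct] using this
    calc r * w i = ‖lam * v i‖ := by
          simp [hw, norm_mul, hr]
      _ = ‖∑ j, (A i j : ℂ) * v j‖ := by rw [he]
      _ ≤ ∑ j, ‖(A i j : ℂ) * v j‖ :=
          norm_sum_le _ _
      _ = ∑ j, A i j * w j := by
          refine Finset.sum_congr rfl fun j _ => ?_
          simp [hw, norm_mul, Complex.norm_real, Real.norm_eq_abs, abs_of_nonneg (hA i j)]
  have hsum1 : ∑ i, r * w i ≤ ∑ i, ∑ j, A i j * w j :=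
    Finset.sum_le_sum fun i _ => h1 i
  have hswap : ∑ i, ∑ j, A i j * w j = ∑ j, (∑ i, A i j) * w j := by
    rw [Finset.sum_comm]
    simp [Finset.sum_mul]
  have hsum2 : ∑ j, (∑ i, A i j) * w j ≤ ∑ j, r * w j :=
    Finset.sum_le_sum fun j _ =>
      mul_le_mul_of_nonneg_right ((hcol j).trans hlam) (hw0 j)
  have heq : ∑ i, r * w i = ∑ i, ∑ j, A i j * w j :=
    le_antisymm hsum1 (by rw [hswap]; exact hsum2)
  have hea : ∀ i, r * w i = ∑ j, A i j * w j :=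
    fun i => (Finset.sum_eq_sum_iff_of_le fun i _ => h1 i).1 heq i (Finset.mem_univ i)
  have heq2 : ∑ j, (∑ i, A i j) * w j = ∑ j, r * w j := by
    refine le_antisymm hsum2 ?_
    rw [← hswap, ← heq]
  have heb : ∀ j, (∑ i, A i j) * w j = r * w j :=
    fun j => (Finset.sum_eq_sum_iff_of_le fun j _ =>
      mul_le_mul_of_nonneg_right ((hcol j).trans hlam) (hw0 j)).1 heq2 j (Finset.mem_univ j)
  -- columns with sum < 1 kill the eigenvector
  have hzero : ∀ j, ∑ i, A i j < 1 → w j = 0 := by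
    intro j hj
    by_contra h
    have hwj : 0 < w j := lt_of_le_of_ne (hw0 j) (Ne.symm h)
    have : (∑ i, A i j) = r := mul_right_cancel₀ (ne_of_gt hwj) (heb j)
    linarith
  -- vanishing propagates backwards along positive entries
  have hprop : ∀ k j, w k = 0 → 0 < A k j → w j = 0 := by
    intro k j hk hAkj
    have hz : ∑ j, A k j * w j = 0 := by rw [← hea k, hk, mul_zero]
    have := (Finset.sum_eq_zero_iff_of_nonneg
      (fun j _ => mul_nonneg (hA k j) (hw0 j))).1 hz j (Finset.mem_univ j)
    have := mul_eq_zero.1 this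
    rcases this with h | h
    · exact absurd h (ne_of_gt hAkj)
    · exact h
  have hall : ∀ j, w j = 0 := by
    intro j
    obtain ⟨m, p, hp0, hstep, hend⟩ := hpath j
    have key : ∀ t, w (p (m - t)) = 0 := by
      intro t
      induction t with
      | zero => simpa using hzero (p m) hend
      | succ t ih =>
          rcases le_or_gt m t with h | h
          · have : m - (t + 1) = m - t := by omega
            rw [this]; exact ih
          · have hs : m - (t + 1) < m := by omega
            have hmt : m - t = (m - (t + 1)) + 1 := by omega
            exact hprop (p (m - t)) (p (m - (t + 1))) ih
              (by rw [hmt]; exact hstep _ hs)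
    have := key m
    simpa [Nat.sub_self, hp0] using this
  apply hv
  funext i
  have := hall i
  simpa [hw] using norm_eq_zero.1 this
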